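/- Let 1 < q ≤ p < ∞ and suppose f ∈ L^{q'}(ℝⁿ) has compact support. Then there exist finitely many nonnegative numbers λ_1,…,λ_N and (p',q')-blocks b_1,…,b_N such that f = Σ_{j=1}^N λ_j b_j and Σ_{j=1}^N λ_j ≤ 8 ‖f‖_{B^{p'}_{q'}(ℝⁿ)}. -/

import Mathlib

open MeasureTheory ENNReal Set Filter

/-- The open axis-parallel cube with corner `a` and side length `s`. -/
noncomputable def cube (n : ℕ) (a : Fin n → ℝ) (s : ℝ) : Set (Fin n → ℝ) :=
  Set.univ.pi fun i => Set.Ioo (a i) (a i + s)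

/-- The Morrey norm `‖f‖_{M^p_q}` on `ℝⁿ`. -/
noncomputable def morreyNorm (n : ℕ) (p q : ℝ) (f : (Fin n → ℝ) → ℝ) : ℝ≥0∞ :=
  ⨆ (a : Fin n → ℝ) (s : ℝ) (_ : 0 < s),
    ENNReal.ofReal ((s ^ n) ^ (1 / p - 1 / q)) *
      (∫⁻ x in cube n a s, ENNReal.ofReal (|f x| ^ q)) ^ (1 / q)

/-- The Hölder conjugate exponent `p' = p/(p-1)`. -/
noncomputable def conjExp (p : ℝ) : ℝ := p / (p - 1)

/-- A `(p',q')`-block: a measurable function supported on a cube `Q` with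
`‖b‖_{L^{q'}} ≤ |Q|^{1/p-1/q}`. -/
def IsBlock (n : ℕ) (p q : ℝ) (b : (Fin n → ℝ) → ℝ) : Prop :=
  Measurable b ∧ ∃ (a : Fin n → ℝ) (s : ℝ), 0 < s ∧
    Function.support b ⊆ cube n a s ∧
    (∫⁻ x, ENNReal.ofReal (|b x| ^ conjExp q)) ^ (1 / conjExp q) ≤
      ENNReal.ofReal ((s ^ n) ^ (1 / p - 1 / q))

/-- `f = ∑ₖ λₖ bₖ` a.e. with absolutely convergent coefficients and `(p',q')`-blocks. -/
def IsBlockRep (n : ℕ) (p q : ℝ) (f : (Fin n → ℝ) → ℝ) (l : ℕ → ℝ)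
    (b : ℕ → (Fin n → ℝ) → ℝ) : Prop :=
  (∀ k, IsBlock n p q (b k)) ∧ Summable (fun k => |l k|) ∧
    ∀ᵐ x : Fin n → ℝ, Summable (fun k => l k * b k x) ∧ f x = ∑' k, l k * b k x

/-- Membership in the block space `B^{p'}_{q'}(ℝⁿ)`. -/
def MemBlockSpace (n : ℕ) (p q : ℝ) (f : (Fin n → ℝ) → ℝ) : Prop :=
  ∃ l b, IsBlockRep n p q f l b

/-- The block space norm `‖f‖_{B^{p'}_{q'}}`: infimal `ℓ¹`-sum of coefficients. -/
noncomputable def blockNorm (n : ℕ) (p q : ℝ) (f : (Fin n → ℝ) → ℝ) : ℝ≥0∞ :=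
  ⨅ (l : ℕ → ℝ) (b : ℕ → (Fin n → ℝ) → ℝ) (_ : IsBlockRep n p q f l b),
    ENNReal.ofReal (∑' k, |l k|)

open Topology

/-!
Take a representation `f = ∑ₖ λₖ bₖ` with `∑ₖ |λₖ| < 2 ‖f‖_B` and a cube `Q ⊇ supp f`. For large `K`
split `Q` along `B_K = {|f - ∑_{k<K} λₖ bₖ| ≤ 1}`: on `Q ∩ B_K`, `f` is the head `∑_{k<K} λₖ bₖ`
(blocks restricted to `Q ∩ B_K`, coefficient sum `≤ ∑ₖ |λₖ|`) plus a remainder bounded by `1`,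
and on `Q \ B_K` we keep `f`. By dominated convergence both leftover pieces tend to `0` in
`L^{q'}`, so each is a multiple of a single block with coefficient at most `‖f‖_B`; in total
`4 ‖f‖_B`. If `‖f‖_B = 0`, Hölder's inequality `∫_E |b| ≤ |E|^{1/p}` for blocks (this is where
`q ≤ p` enters) forces `f = 0`.
-/

lemma conjExp_pos {q : ℝ} (hq : 1 < q) : 0 < conjExp q :=
  div_pos (by linarith) (by linarith)

lemma one_div_conjExp {q : ℝ} (hq : 1 < q) : 1 / conjExp q = 1 - 1 / q := by
  have hq₀ : q ≠ 0 := by linarith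
  have hq₁ : q - 1 ≠ 0 := by linarith
  rw [conjExp]
  field_simp

lemma lintegral_ofReal_abs_rpow_rpow_eq_eLpNorm {α : Type*} [MeasurableSpace α] (μ : Measure α)
    {r : ℝ} (hr : 0 < r) (g : α → ℝ) :
    (∫⁻ x, ENNReal.ofReal (|g x| ^ r) ∂μ) ^ (1 / r) = eLpNorm g (ENNReal.ofReal r) μ := by
  rw [eLpNorm_eq_lintegral_rpow_enorm_toReal (by simpa using hr) ofReal_ne_top,
    toReal_ofReal hr.le]
  congr 1
  refine lintegral_congr fun x => ?_
  rw [Real.enorm_eq_ofReal_abs, ENNReal.ofReal_rpow_of_nonneg (abs_nonneg _) hr.le]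

lemma measurableSet_cube (n : ℕ) (a : Fin n → ℝ) (s : ℝ) : MeasurableSet (cube n a s) :=
  MeasurableSet.univ_pi fun _ => measurableSet_Ioo

lemma volume_cube (n : ℕ) (a : Fin n → ℝ) {s : ℝ} (hs : 0 ≤ s) :
    volume (cube n a s) = ENNReal.ofReal (s ^ n) := by
  simp [cube, volume_pi_pi, Real.volume_Ioo, ENNReal.ofReal_pow hs]

lemma exists_cube_superset {n : ℕ} {E : Set (Fin n → ℝ)} (hE : Bornology.IsBounded E) :
    ∃ a s, 0 < s ∧ E ⊆ cube n a s := by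
  obtain ⟨R, hR0, hR⟩ := hE.subset_closedBall_lt 0 0
  refine ⟨fun _ => -(R + 1), 2 * R + 2, by positivity, fun x hx i _ => ?_⟩
  have hxi : |x i| ≤ R :=
    (norm_le_pi_norm x i).trans (mem_closedBall_zero_iff.mp (hR hx))
  constructor <;> linarith [abs_le.mp hxi]

lemma isBlock_iff_eLpNorm {n : ℕ} {p q : ℝ} (hq : 1 < q) {b : (Fin n → ℝ) → ℝ} :
    IsBlock n p q b ↔ Measurable b ∧ ∃ a s, 0 < s ∧ Function.support b ⊆ cube n a s ∧
      eLpNorm b (ENNReal.ofReal (conjExp q)) ≤ ENNReal.ofReal ((s ^ n) ^ (1 / p - 1 / q)) := by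
  rw [IsBlock, lintegral_ofReal_abs_rpow_rpow_eq_eLpNorm _ (conjExp_pos hq)]

lemma rpow_mul_min_rpow_le_rpow {p q t e : ℝ} (hq : 0 < q) (hqp : q ≤ p) (ht : 0 < t)
    (he : 0 < e) : t ^ (1 / p - 1 / q) * min t e ^ (1 / q) ≤ e ^ (1 / p) := by
  rcases le_total t e with hte | het
  · rw [min_eq_left hte, ← Real.rpow_add ht, sub_add_cancel]
    exact Real.rpow_le_rpow ht.le hte (by positivity [hq.trans_le hqp])
  · have hexp : 1 / p - 1 / q ≤ 0 := sub_nonpos.mpr (one_div_le_one_div_of_le hq hqp)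
    calc t ^ (1 / p - 1 / q) * min t e ^ (1 / q)
        ≤ e ^ (1 / p - 1 / q) * e ^ (1 / q) := by
          rw [min_eq_right het]
          exact mul_le_mul_of_nonneg_right (Real.rpow_le_rpow_of_nonpos he het hexp)
            (by positivity)
      _ = e ^ (1 / p) := by rw [← Real.rpow_add he, sub_add_cancel]

section Blocks

variable {n : ℕ} {p q : ℝ} {b : (Fin n → ℝ) → ℝ}

lemma IsBlock.neg (hb : IsBlock n p q b) : IsBlock n p q (-b) := by
  obtain ⟨hbm, a, s, hs, hsupp, hnorm⟩ := hb
  exact ⟨hbm.neg, a, s, hs, by rwa [Function.support_neg], by simpa using hnorm⟩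

lemma IsBlock.indicator (hq : 1 < q) (hb : IsBlock n p q b) {S : Set (Fin n → ℝ)}
    (hS : MeasurableSet S) : IsBlock n p q (S.indicator b) := by
  obtain ⟨hbm, a, s, hs, hsupp, hnorm⟩ := (isBlock_iff_eLpNorm hq).1 hb
  exact (isBlock_iff_eLpNorm hq).2 ⟨hbm.indicator hS, a, s, hs,
    Set.support_indicator.trans_subset (inter_subset_right.trans hsupp),
    (eLpNorm_indicator_le b).trans hnorm⟩

lemma IsBlock.setLIntegral_enorm_le (hq : 1 < q) (hqp : q ≤ p) (hb : IsBlock n p q b)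
    {E : Set (Fin n → ℝ)} {e : ℝ} (he : 0 < e) (hE : volume E ≤ ENNReal.ofReal e) :
    ∫⁻ x in E, ‖b x‖ₑ ≤ ENNReal.ofReal (e ^ (1 / p)) := by
  obtain ⟨hbm, a, s, hs, hsupp, hnorm⟩ := (isBlock_iff_eLpNorm hq).1 hb
  set Q := cube n a s
  set μ := volume.restrict (Q ∩ E) with hμdef
  have ht : 0 < s ^ n := pow_pos hs n
  have hμ : μ univ ≤ ENNReal.ofReal (min (s ^ n) e) := by
    rw [Measure.restrict_apply_univ, ENNReal.ofReal_min, ← volume_cube n a hs.le]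
    exact le_min (measure_mono inter_subset_left) ((measure_mono inter_subset_right).trans hE)
  have hrestrict : ∫⁻ x in E, ‖b x‖ₑ = eLpNorm b 1 μ := by
    rw [hμdef, eLpNorm_one_eq_lintegral_enorm,
      ← Measure.restrict_restrict (measurableSet_cube n a s)]
    exact (setLIntegral_eq_of_support_subset fun x hx => hsupp (enorm_ne_zero.mp hx)).symm
  calc ∫⁻ x in E, ‖b x‖ₑ
      ≤ eLpNorm b (ENNReal.ofReal (conjExp q)) μ *
          μ univ ^ (1 / (1 : ℝ≥0∞).toReal - 1 / (ENNReal.ofReal (conjExp q)).toReal) := by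
        rw [hrestrict]
        refine eLpNorm_le_eLpNorm_mul_rpow_measure_univ ?_ hbm.aestronglyMeasurable
        rw [← ENNReal.ofReal_one]
        exact ENNReal.ofReal_le_ofReal (by rw [conjExp, le_div_iff₀] <;> linarith)
    _ ≤ ENNReal.ofReal ((s ^ n) ^ (1 / p - 1 / q)) *
          ENNReal.ofReal (min (s ^ n) e) ^ (1 / q) := by
        rw [ENNReal.toReal_one, toReal_ofReal (conjExp_pos hq).le, one_div_conjExp hq,
          div_one, _root_.sub_sub_cancel]
        gcongr
        exact (eLpNorm_mono_measure _ Measure.restrict_le_self).trans hnorm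
    _ = ENNReal.ofReal ((s ^ n) ^ (1 / p - 1 / q) * min (s ^ n) e ^ (1 / q)) := by
        rw [ENNReal.ofReal_rpow_of_nonneg (by positivity) (by positivity),
          ENNReal.ofReal_mul (by positivity)]
    _ ≤ ENNReal.ofReal (e ^ (1 / p)) :=
        ENNReal.ofReal_le_ofReal (rpow_mul_min_rpow_le_rpow (by linarith) hqp ht he)

end Blocks

def IsFiniteBlockSum (n : ℕ) (p q : ℝ) (f : (Fin n → ℝ) → ℝ) (Λ : ℝ) : Prop :=
  ∃ (N : ℕ) (l : Fin N → ℝ) (b : Fin N → (Fin n → ℝ) → ℝ),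
    (∀ j, 0 ≤ l j ∧ IsBlock n p q (b j)) ∧ (∀ᵐ x, f x = ∑ j, l j * b j x) ∧ ∑ j, l j ≤ Λ

namespace IsFiniteBlockSum

variable {n : ℕ} {p q : ℝ} {f g : (Fin n → ℝ) → ℝ} {Λ Λ' : ℝ}

lemma of_ae_eq_zero (hf : f =ᵐ[volume] 0) : IsFiniteBlockSum n p q f 0 :=
  ⟨0, Fin.elim0, Fin.elim0, fun j => j.elim0, by simpa [Filter.EventuallyEq] using hf, by simp⟩

lemma mono (h : IsFiniteBlockSum n p q f Λ) (hΛ : Λ ≤ Λ') : IsFiniteBlockSum n p q f Λ' := by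
  obtain ⟨N, l, b, hlb, hf, hsum⟩ := h
  exact ⟨N, l, b, hlb, hf, hsum.trans hΛ⟩

lemma congr_ae (h : IsFiniteBlockSum n p q f Λ) (hfg : f =ᵐ[volume] g) :
    IsFiniteBlockSum n p q g Λ := by
  obtain ⟨N, l, b, hlb, hf, hsum⟩ := h
  exact ⟨N, l, b, hlb, hfg.symm.trans hf, hsum⟩

lemma add (hf : IsFiniteBlockSum n p q f Λ) (hg : IsFiniteBlockSum n p q g Λ') :
    IsFiniteBlockSum n p q (f + g) (Λ + Λ') := by
  obtain ⟨N, l, b, hlb, hfae, hsum⟩ := hf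
  obtain ⟨M, l', b', hlb', hgae, hsum'⟩ := hg
  refine ⟨N + M, Fin.append l l', Fin.append b b',
    Fin.addCases (by simpa using hlb) (by simpa using hlb'), ?_, ?_⟩
  · filter_upwards [hfae, hgae] with x hfx hgx
    simp [Fin.sum_univ_add, hfx, hgx]
  · simpa [Fin.sum_univ_add] using add_le_add hsum hsum'

lemma const_mul_block {b : (Fin n → ℝ) → ℝ} (hb : IsBlock n p q b) (c : ℝ) :
    IsFiniteBlockSum n p q (fun x => c * b x) |c| := by
  rcases le_total 0 c with hc | hc
  · exact ⟨1, fun _ => c, fun _ => b, fun _ => ⟨hc, hb⟩, by simp, by simp [abs_of_nonneg hc]⟩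
  · exact ⟨1, fun _ => -c, fun _ => -b, fun _ => ⟨neg_nonneg.mpr hc, hb.neg⟩, by simp,
      by simp [abs_of_nonpos hc]⟩

lemma finset_sum {ι : Type*} (s : Finset ι) {F : ι → (Fin n → ℝ) → ℝ} {L : ι → ℝ}
    (h : ∀ k ∈ s, IsFiniteBlockSum n p q (F k) (L k)) :
    IsFiniteBlockSum n p q (∑ k ∈ s, F k) (∑ k ∈ s, L k) := by
  classical
  induction s using Finset.induction_on with
  | empty => simpa using of_ae_eq_zero (p := p) (q := q) (f := (0 : (Fin n → ℝ) → ℝ)) (by rfl)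
  | insert k s hk ih =>
    rw [Finset.sum_insert hk, Finset.sum_insert hk]
    exact (h k (s.mem_insert_self k)).add (ih fun j hj => h j (Finset.mem_insert_of_mem hj))

lemma indicator (hq : 1 < q) (h : IsFiniteBlockSum n p q f Λ) {S : Set (Fin n → ℝ)}
    (hS : MeasurableSet S) :
    IsFiniteBlockSum n p q (S.indicator f) Λ := by
  obtain ⟨N, l, b, hlb, hf, hsum⟩ := h
  refine ⟨N, l, fun j => S.indicator (b j), fun j => ⟨(hlb j).1, (hlb j).2.indicator hq hS⟩,
    hf.mono fun x hx => ?_, hsum⟩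
  by_cases hxS : x ∈ S <;> simp [hxS, hx]

end IsFiniteBlockSum

lemma tendsto_eLpNorm_of_dominated {α E : Type*} [MeasurableSpace α] {μ : Measure α}
    [NormedAddCommGroup E] {p : ℝ≥0∞} (hp : p ≠ ∞) {F : ℕ → α → E}
    {h : α → ℝ} (hF : ∀ K, AEStronglyMeasurable (F K) μ) (hbound : ∀ K, ∀ᵐ x ∂μ, ‖F K x‖ ≤ h x)
    (hh : MemLp h p μ) (hlim : ∀ᵐ x ∂μ, Tendsto (fun K => F K x) atTop (𝓝 0)) :
    Tendsto (fun K => eLpNorm (F K) p μ) atTop (𝓝 0) := by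
  rcases eq_or_ne p 0 with rfl | hp0
  · simp
  have hr : 0 < p.toReal := ENNReal.toReal_pos hp0 hp
  have hint : Tendsto (fun K => ∫⁻ x, ‖F K x‖ₑ ^ p.toReal ∂μ) atTop (𝓝 0) := by
    have hlim' : ∀ᵐ x ∂μ, Tendsto (fun K => ‖F K x‖ₑ ^ p.toReal) atTop (𝓝 0) := by
      filter_upwards [hlim] with x hx
      have := ((ENNReal.continuous_rpow_const (y := p.toReal)).tendsto _).comp hx.enorm
      rwa [enorm_zero, ENNReal.zero_rpow_of_pos hr] at this
    have := tendsto_lintegral_of_dominated_convergence' (fun x => ‖h x‖ₑ ^ p.toReal)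
      (f := fun _ => 0) (fun K => (hF K).enorm.pow_const _)
      (fun K => (hbound K).mono fun x hx =>
        ENNReal.rpow_le_rpow (enorm_le_iff_norm_le.mpr (hx.trans (Real.le_norm_self _))) hr.le)
      ((eLpNorm_lt_top_iff_lintegral_rpow_enorm_lt_top hp0 hp).1 hh.eLpNorm_lt_top).ne
      hlim'
    simpa using this
  have h0 : (0 : ℝ≥0∞) ^ (1 / p.toReal) = 0 := ENNReal.zero_rpow_of_pos (by positivity)
  simp_rw [eLpNorm_eq_lintegral_rpow_enorm_toReal hp0 hp]
  exact h0 ▸ (ENNReal.continuous_rpow_const.tendsto 0).comp hint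

section Truncation

variable {α : Type*} [MeasurableSpace α] {μ : Measure α} {p : ℝ≥0∞}

lemma tendsto_eLpNorm_indicator_of_eventually_notMem (hp : p ≠ ∞) {f : α → ℝ}
    (hf : MemLp f p μ) {S : ℕ → Set α} (hS : ∀ K, MeasurableSet (S K))
    (h : ∀ᵐ x ∂μ, ∀ᶠ K in atTop, x ∉ S K) :
    Tendsto (fun K => eLpNorm ((S K).indicator f) p μ) atTop (𝓝 0) :=
  tendsto_eLpNorm_of_dominated hp (fun K => hf.1.indicator (hS K))
    (fun _ => Eventually.of_forall (norm_indicator_le_norm_self f)) hf.norm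
    (h.mono fun _ hx => tendsto_const_nhds.congr'
      (hx.mono fun _ hK => (Set.indicator_of_notMem hK f).symm))

lemma tendsto_eLpNorm_indicator_abs_le_one (hp : p ≠ ∞) {Q : Set α}
    (hQ : MeasurableSet Q) (hQμ : μ Q ≠ ∞) {G : ℕ → α → ℝ} (hG : ∀ K, Measurable (G K))
    (hlim : ∀ᵐ x ∂μ, Tendsto (fun K => G K x) atTop (𝓝 0)) :
    Tendsto (fun K => eLpNorm ((Q ∩ {x | |G K x| ≤ 1}).indicator (G K)) p μ) atTop (𝓝 0) := by
  refine tendsto_eLpNorm_of_dominated hp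
    (fun K => ((hG K).indicator (hQ.inter (measurableSet_le (hG K).abs measurable_const)))
      |>.aestronglyMeasurable)
    (fun K => Eventually.of_forall fun x => ?_) (memLp_indicator_const p hQ 1 (Or.inr hQμ))
    (hlim.mono fun x hx => squeeze_zero_norm (fun K => norm_indicator_le_norm_self _ x)
      (by simpa using hx.norm))
  by_cases hx : x ∈ Q ∩ {x | |G K x| ≤ 1}
  · simpa [hx.1, hx] using hx.2
  · rw [Set.indicator_of_notMem hx, norm_zero]
    exact Set.indicator_nonneg (fun _ _ => zero_le_one) x

end Truncation

section Scaling

variable {n : ℕ} {p q : ℝ} {f : (Fin n → ℝ) → ℝ}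

lemma IsFiniteBlockSum.of_eLpNorm_le (hq : 1 < q) (hf : Measurable f) {a : Fin n → ℝ} {s : ℝ}
    (hs : 0 < s) (hfQ : Function.support f ⊆ cube n a s) {δ : ℝ} (hδ : 0 < δ)
    (hnorm : eLpNorm f (ENNReal.ofReal (conjExp q)) ≤
      ENNReal.ofReal (δ * (s ^ n) ^ (1 / p - 1 / q))) :
    IsFiniteBlockSum n p q f δ := by
  have hblock : IsBlock n p q (δ⁻¹ • f) := by
    refine (isBlock_iff_eLpNorm hq).2 ⟨hf.const_smul _, a, s, hs, ?_, ?_⟩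
    · exact (Function.support_const_smul_subset _ _).trans hfQ
    rw [eLpNorm_const_smul, Real.enorm_eq_ofReal_abs, abs_inv, abs_of_pos hδ]
    refine (mul_le_mul_right hnorm _).trans_eq ?_
    rw [← ENNReal.ofReal_mul (inv_nonneg.mpr hδ.le), inv_mul_cancel_left₀ hδ.ne']
  have hsum := (IsFiniteBlockSum.const_mul_block hblock δ).mono (abs_of_pos hδ).le
  refine hsum.congr_ae (Filter.Eventually.of_forall fun x => ?_)
  simp [hδ.ne']

lemma exists_isFiniteBlockSum (hq : 1 < q) (hf : Measurable f) {a : Fin n → ℝ} {s : ℝ}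
    (hs : 0 < s) (hfQ : Function.support f ⊆ cube n a s)
    (hfLp : eLpNorm f (ENNReal.ofReal (conjExp q)) ≠ ∞) :
    ∃ Λ, IsFiniteBlockSum n p q f Λ := by
  set t := (s ^ n) ^ (1 / p - 1 / q)
  have ht : 0 < t := by positivity
  refine ⟨_, IsFiniteBlockSum.of_eLpNorm_le hq hf hs hfQ
    (δ := (eLpNorm f (ENNReal.ofReal (conjExp q))).toReal / t + 1) (by positivity) ?_⟩
  rw [ENNReal.le_ofReal_iff_toReal_le hfLp (by positivity), add_mul, div_mul_cancel₀ _ ht.ne']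
  linarith

end Scaling

section BlockNorm

variable {n : ℕ} {p q : ℝ} {f : (Fin n → ℝ) → ℝ}

lemma IsBlockRep.setLIntegral_enorm_le (hq : 1 < q) (hqp : q ≤ p) {l : ℕ → ℝ}
    {b : ℕ → (Fin n → ℝ) → ℝ} (hrep : IsBlockRep n p q f l b) {E : Set (Fin n → ℝ)} {e : ℝ}
    (he : 0 < e) (hE : volume E ≤ ENNReal.ofReal e) :
    ∫⁻ x in E, ‖f x‖ₑ ≤ ENNReal.ofReal (e ^ (1 / p)) * ENNReal.ofReal (∑' k, |l k|) := by
  obtain ⟨hblocks, hsum, hae⟩ := hrep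
  calc ∫⁻ x in E, ‖f x‖ₑ
      ≤ ∫⁻ x in E, ∑' k, ‖l k‖ₑ * ‖b k x‖ₑ := by
        refine lintegral_mono_ae (ae_restrict_of_ae ?_)
        filter_upwards [hae] with x hx
        rw [hx.2]
        simpa only [enorm_mul] using enorm_tsum_le_tsum_enorm (f := fun k => l k * b k x)
    _ = ∑' k, ‖l k‖ₑ * ∫⁻ x in E, ‖b k x‖ₑ := by
        rw [lintegral_tsum fun k => ((hblocks k).1.enorm.const_mul _).aemeasurable]
        exact tsum_congr fun k => lintegral_const_mul _ (hblocks k).1.enorm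
    _ ≤ ∑' k, ‖l k‖ₑ * ENNReal.ofReal (e ^ (1 / p)) := by
        gcongr with k
        exact (hblocks k).setLIntegral_enorm_le hq hqp he hE
    _ = ENNReal.ofReal (e ^ (1 / p)) * ENNReal.ofReal (∑' k, |l k|) := by
        simp_rw [Real.enorm_eq_ofReal_abs]
        rw [ENNReal.tsum_mul_right, ENNReal.ofReal_tsum_of_nonneg (fun _ => abs_nonneg _) hsum,
          mul_comm]

lemma setLIntegral_enorm_le_blockNorm (hq : 1 < q) (hqp : q ≤ p) {E : Set (Fin n → ℝ)} {e : ℝ}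
    (he : 0 < e) (hE : volume E ≤ ENNReal.ofReal e) :
    ∫⁻ x in E, ‖f x‖ₑ ≤ ENNReal.ofReal (e ^ (1 / p)) * blockNorm n p q f := by
  have hC : ENNReal.ofReal (e ^ (1 / p)) ≠ 0 := by
    rw [ne_eq, ENNReal.ofReal_eq_zero, not_le]; positivity
  simp only [blockNorm, ENNReal.mul_iInf_of_ne hC ENNReal.ofReal_ne_top]
  exact le_iInf fun l => le_iInf fun b => le_iInf fun hrep =>
    hrep.setLIntegral_enorm_le hq hqp he hE

lemma ae_eq_zero_of_blockNorm_eq_zero (hq : 1 < q) (hqp : q ≤ p) (hf : AEMeasurable f)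
    {a : Fin n → ℝ} {s : ℝ} (hs : 0 < s) (hfQ : Function.support f ⊆ cube n a s)
    (h0 : blockNorm n p q f = 0) : f =ᵐ[volume] 0 := by
  have hint : ∫⁻ x, ‖f x‖ₑ = 0 := by
    rw [← setLIntegral_eq_of_support_subset (s := cube n a s)
      fun x hx => hfQ (enorm_ne_zero.mp hx)]
    simpa [h0] using setLIntegral_enorm_le_blockNorm (f := f) hq hqp (pow_pos hs n)
      (volume_cube n a hs.le).le
  filter_upwards [(lintegral_eq_zero_iff' hf.enorm).mp hint] with x hx
  simpa using hx

lemma exists_isBlockRep_lt_of_blockNorm_lt {c : ℝ≥0∞} (h : blockNorm n p q f < c) :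
    ∃ l b, IsBlockRep n p q f l b ∧ ENNReal.ofReal (∑' k, |l k|) < c := by
  simpa only [blockNorm, iInf_lt_iff, exists_prop] using h

end BlockNorm

lemma eq_indicator_add_indicator_diff_add_indicator {α : Type*} {Q B : Set α} {f h : α → ℝ}
    (hf : Function.support f ⊆ Q) :
    f = (Q ∩ B).indicator h + (Q \ B).indicator f + (Q ∩ B).indicator (f - h) := by
  ext x
  by_cases hxQ : x ∈ Q
  · by_cases hxB : x ∈ B <;> simp [hxQ, hxB]
  · simp [hxQ, Function.notMem_support.mp (mt (@hf x) hxQ)]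

lemma IsBlockRep.ae_tendsto_sub_sum_range {n : ℕ} {p q : ℝ} {f : (Fin n → ℝ) → ℝ} {l : ℕ → ℝ}
    {b : ℕ → (Fin n → ℝ) → ℝ} (hrep : IsBlockRep n p q f l b) :
    ∀ᵐ x, Tendsto (fun K => f x - ∑ k ∈ Finset.range K, l k * b k x) atTop (𝓝 0) := by
  filter_upwards [hrep.2.2] with x ⟨hsum, hfx⟩
  simpa [← hfx] using tendsto_const_nhds (x := f x) |>.sub hsum.hasSum.tendsto_sum_nat

lemma IsBlockRep.isFiniteBlockSum_tsum_add {n : ℕ} {p q : ℝ} {f : (Fin n → ℝ) → ℝ} (hq : 1 < q)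
    (hf : Measurable f) {a : Fin n → ℝ} {s : ℝ} (hs : 0 < s)
    (hfQ : Function.support f ⊆ cube n a s) (hfLp : eLpNorm f (ENNReal.ofReal (conjExp q)) ≠ ∞)
    {l : ℕ → ℝ} {b : ℕ → (Fin n → ℝ) → ℝ} (hrep : IsBlockRep n p q f l b) {δ : ℝ} (hδ : 0 < δ) :
    IsFiniteBlockSum n p q f (∑' k, |l k| + 2 * δ) := by
  set Q := cube n a s
  have hQ : MeasurableSet Q := measurableSet_cube n a s
  set H : ℕ → (Fin n → ℝ) → ℝ := fun K => ∑ k ∈ Finset.range K, fun x => l k * b k x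
  have hHm : ∀ K, Measurable (H K) := fun K => by
    simpa only [H, Finset.sum_fn] using
      Finset.measurable_sum _ fun k _ => (hrep.1 k).1.const_mul (l k)
  have hlim : ∀ᵐ x, Tendsto (fun K => (f - H K) x) atTop (𝓝 0) := by
    simpa [H, Finset.sum_apply] using hrep.ae_tendsto_sub_sum_range
  set B : ℕ → Set (Fin n → ℝ) := fun K => {x | |(f - H K) x| ≤ 1}
  have hB : ∀ K, MeasurableSet (B K) := fun K =>
    measurableSet_le (hf.sub (hHm K)).abs measurable_const
  have h₁ := tendsto_eLpNorm_indicator_of_eventually_notMem ofReal_ne_top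
    ⟨hf.aestronglyMeasurable, hfLp.lt_top⟩ (fun K => hQ.diff (hB K))
    (hlim.mono fun x hx => ((tendsto_order.1 hx.abs).2 1 (by simp)).mono fun K hK hxK =>
      hxK.2 hK.le)
  have h₂ := tendsto_eLpNorm_indicator_abs_le_one (p := ENNReal.ofReal (conjExp q))
    ofReal_ne_top hQ (by simp [Q, volume_cube n a hs.le]) (fun K => hf.sub (hHm K)) hlim
  have hε : 0 < ENNReal.ofReal (δ * (s ^ n) ^ (1 / p - 1 / q)) :=
    ENNReal.ofReal_pos.mpr (by positivity)
  obtain ⟨K, hK₁, hK₂⟩ := ((h₁.eventually (ge_mem_nhds hε)).and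
    (h₂.eventually (ge_mem_nhds hε))).exists
  have hheads : IsFiniteBlockSum n p q (H K) (∑ k ∈ Finset.range K, |l k|) :=
    IsFiniteBlockSum.finset_sum _ fun k _ => IsFiniteBlockSum.const_mul_block (hrep.1 k) (l k)
  have hpiece₁ := IsFiniteBlockSum.of_eLpNorm_le hq (hf.indicator (hQ.diff (hB K))) hs
    (Set.support_indicator_subset.trans sdiff_subset) hδ hK₁
  have hpiece₂ := IsFiniteBlockSum.of_eLpNorm_le hq ((hf.sub (hHm K)).indicator (hQ.inter (hB K)))
    hs (Set.support_indicator_subset.trans inter_subset_left) hδ hK₂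
  rw [eq_indicator_add_indicator_diff_add_indicator (B := B K) (h := H K) hfQ]
  refine (((hheads.indicator hq (hQ.inter (hB K))).add hpiece₁).add hpiece₂).mono ?_
  have := hrep.2.1.sum_le_tsum (Finset.range K) fun k _ => abs_nonneg (l k)
  linarith

/-- a compactly supported f ∈ L^{q'}(ℝⁿ) admits a finite decomposition
into (p',q')-blocks with coefficient sum at most 8 ‖f‖_{B^{p'}_{q'}}. -/
theorem stmt19 (n : ℕ) (p q : ℝ) (hq : 1 < q) (hqp : q ≤ p)
    (f : (Fin n → ℝ) → ℝ) (hf : Measurable f) (hsupp : HasCompactSupport f)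
    (hLq : (∫⁻ x, ENNReal.ofReal (|f x| ^ conjExp q)) < ⊤) :
    ∃ (N : ℕ) (l : Fin N → ℝ) (b : Fin N → (Fin n → ℝ) → ℝ),
      (∀ j, 0 ≤ l j ∧ IsBlock n p q (b j)) ∧
      (∀ᵐ x : Fin n → ℝ, f x = ∑ j, l j * b j x) ∧
      ENNReal.ofReal (∑ j, l j) ≤ 8 * blockNorm n p q f := by
  suffices ∃ Λ, IsFiniteBlockSum n p q f Λ ∧ ENNReal.ofReal Λ ≤ 8 * blockNorm n p q f by
    obtain ⟨Λ, ⟨N, l, b, hlb, hfae, hsum⟩, hΛ⟩ := this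
    exact ⟨N, l, b, hlb, hfae, (ENNReal.ofReal_le_ofReal hsum).trans hΛ⟩
  obtain ⟨a, s, hs, hfQ⟩ := exists_cube_superset hsupp.isCompact.isBounded
  replace hfQ := (subset_tsupport f).trans hfQ
  have hfLp : eLpNorm f (ENNReal.ofReal (conjExp q)) ≠ ∞ := by
    rw [← lintegral_ofReal_abs_rpow_rpow_eq_eLpNorm _ (conjExp_pos hq)]
    exact ENNReal.rpow_ne_top_of_nonneg (one_div_pos.mpr (conjExp_pos hq)).le hLq.ne
  set ν := blockNorm n p q f
  by_cases hν0 : ν = 0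
  · exact ⟨0, .of_ae_eq_zero (ae_eq_zero_of_blockNorm_eq_zero hq hqp hf.aemeasurable hs hfQ hν0),
      by simp⟩
  by_cases hνtop : ν = ∞
  · obtain ⟨Λ, hΛ⟩ := exists_isFiniteBlockSum (p := p) hq hf hs hfQ hfLp
    exact ⟨Λ, hΛ, by simp [hνtop]⟩
  obtain ⟨l, b, hrep, hl⟩ :=
    exists_isBlockRep_lt_of_blockNorm_lt (ENNReal.lt_add_right hνtop hν0 : ν < ν + ν)
  refine ⟨_, hrep.isFiniteBlockSum_tsum_add hq hf hs hfQ hfLp (ENNReal.toReal_pos hν0 hνtop), ?_⟩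
  calc ENNReal.ofReal (∑' k, |l k| + 2 * ν.toReal)
      ≤ ENNReal.ofReal (∑' k, |l k|) + 2 * ν := by
        refine ENNReal.ofReal_add_le.trans_eq ?_
        rw [ENNReal.ofReal_mul zero_le_two, ENNReal.ofReal_toReal hνtop, ENNReal.ofReal_ofNat]
    _ ≤ (ν + ν) + 2 * ν := by gcongr
    _ ≤ 8 * ν := by rw [← two_mul, ← add_mul]; gcongr; norm_num
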